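/- Every finite simple graph that is contractible in itself has Euler characteristic equal to 1. -/

import Mathlib

noncomputable def cfilter {V : Type*} (p : V → Prop) (s : Finset V) : Finset V :=
  @Finset.filter _ p (Classical.decPred p) s

lemma cfilter_card_lt {V : Type*} {p : V → Prop} {s : Finset V} {x : V} (hx : x ∈ s)
    (hpx : ¬ p x) : (cfilter p s).card < s.card := by
  classical
  refine Finset.card_lt_card ?_
  unfold cfilter
  rw [Finset.filter_congr_decidable]
  exact (Finset.ssubset_iff_of_subset (Finset.filter_subset _ _)).mpr
    ⟨x, hx, fun h => hpx (Finset.mem_filter.mp h).2⟩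

/-- Ivashchenko contractibility (in itself) of the subgraph of `G` induced on the finite
vertex set `s`: either `s` is a single vertex, or there is an injective function `f` on `s`
such that for every non-minimal vertex `x` the down-sphere `S⁻_f(x)` (the neighbours of `x`
in `s` with smaller `f`-value) is contractible in itself. -/
def Contractible {V : Type*} (G : SimpleGraph V) (s : Finset V) : Prop :=
  s.card = 1 ∨ (1 < s.card ∧ ∃ f : V → ℝ, Set.InjOn f ↑s ∧
    ∀ x ∈ s, (∃ y ∈ s, f y < f x) →
      Contractible G (cfilter (fun y => G.Adj x y ∧ f y < f x) s))
termination_by s.card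
decreasing_by
  rename_i hx hlt
  exact cfilter_card_lt hx (fun h => G.irrefl h.1)

/-- Euler characteristic of the subgraph of `G` induced on the finite vertex set `s`:
the alternating sum `Σ_k (-1)^k v_k`, where `v_k` is the number of `(k+1)`-cliques of `G`
contained in `s`. -/
noncomputable def echar {V : Type*} (G : SimpleGraph V) (s : Finset V) : ℤ :=
  ∑ k ∈ Finset.range (s.card + 1),
    (-1 : ℤ) ^ k *
      (Nat.card {t : Finset V // t ⊆ s ∧ t.card = k + 1 ∧ G.IsClique (t : Set V)} : ℤ)

/-!
Deleting a vertex `x` from a graph removes exactly the cliques through `x`, and these correspond,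
via `t ↦ t.erase x`, to the cliques of the unit sphere `S(x)` (one size smaller, including the
empty clique). Hence `χ(G) = χ(G - x) + 1 - χ(S(x))`. If `G` is contractible and `x` maximises
the witnessing function `f`, then `S(x) = S⁻_f(x)` and `G - x` are contractible (with `f`
restricted), so by induction both have Euler characteristic `1`, and so does `G`.
-/

open Finset

section cfilter

variable {V : Type*} {p q : V → Prop} {s : Finset V} {x : V}

lemma mem_cfilter : x ∈ cfilter p s ↔ x ∈ s ∧ p x := by
  classical
  rw [cfilter, filter_congr_decidable, mem_filter]

lemma cfilter_congr (h : ∀ y ∈ s, p y ↔ q y) : cfilter p s = cfilter q s := by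
  ext y
  simp only [mem_cfilter]
  exact ⟨fun ⟨hy, hp⟩ => ⟨hy, (h y hy).1 hp⟩, fun ⟨hy, hq⟩ => ⟨hy, (h y hy).2 hq⟩⟩

lemma cfilter_erase [DecidableEq V] (h : ¬ p x) : cfilter p (s.erase x) = cfilter p s := by
  ext y
  simp only [mem_cfilter, mem_erase]
  exact ⟨fun ⟨⟨_, hy⟩, hp⟩ => ⟨hy, hp⟩, fun ⟨hy, hp⟩ => ⟨⟨by rintro rfl; exact h hp, hy⟩, hp⟩⟩

end cfilter

namespace SimpleGraph

variable {V : Type*} (G : SimpleGraph V)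

def cliquesIn (s : Finset V) (n : ℕ) : Set (Finset V) := {t | t ⊆ s ∧ G.IsNClique n t}

variable {G}

lemma cliquesIn_finite (s : Finset V) (n : ℕ) : (G.cliquesIn s n).Finite :=
  (s.powerset : Set (Finset V)).toFinite.subset fun _ ht => mem_powerset.2 ht.1

lemma cliquesIn_eq_empty {s : Finset V} {n : ℕ} (hn : #s < n) : G.cliquesIn s n = ∅ :=
  Set.eq_empty_of_forall_notMem fun _ ⟨hts, ht⟩ =>
    (card_le_card hts).not_gt (ht.card_eq ▸ hn)

lemma cliquesIn_zero (s : Finset V) : G.cliquesIn s 0 = {∅} := by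
  ext t
  simp only [cliquesIn, isNClique_zero, Set.mem_ofPred_eq, Set.mem_singleton_iff]
  exact ⟨And.right, fun ht => ⟨ht ▸ empty_subset s, ht⟩⟩

lemma cliquesIn_succ_eq_union [DecidableEq V] {s : Finset V} {x : V} (hx : x ∈ s) (n : ℕ) :
    G.cliquesIn s (n + 1) =
      G.cliquesIn (s.erase x) (n + 1) ∪ insert x '' G.cliquesIn (cfilter (G.Adj x) s) n := by
  ext t
  simp only [cliquesIn, Set.mem_union, Set.mem_image, Set.mem_ofPred_eq, subset_erase]
  constructor
  · rintro ⟨hts, ht⟩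
    by_cases hxt : x ∈ t
    · refine Or.inr ⟨t.erase x, ⟨fun y hy => ?_, ht.erase_of_mem hxt⟩, insert_erase hxt⟩
      obtain ⟨hyx, hyt⟩ := mem_erase.1 hy
      exact mem_cfilter.2 ⟨hts hyt, ht.isClique hxt hyt (Ne.symm hyx)⟩
    · exact Or.inl ⟨⟨hts, hxt⟩, ht⟩
  · rintro (⟨⟨hts, -⟩, ht⟩ | ⟨u, ⟨hus, hu⟩, rfl⟩)
    · exact ⟨hts, ht⟩
    · have hadj : ∀ y ∈ u, G.Adj x y := fun y hy => (mem_cfilter.1 (hus hy)).2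
      exact ⟨insert_subset hx fun y hy => (mem_cfilter.1 (hus hy)).1, hu.insert hadj⟩

lemma ncard_cliquesIn_succ [DecidableEq V] {s : Finset V} {x : V} (hx : x ∈ s) (n : ℕ) :
    (G.cliquesIn s (n + 1)).ncard =
      (G.cliquesIn (s.erase x) (n + 1)).ncard + (G.cliquesIn (cfilter (G.Adj x) s) n).ncard := by
  have hxu : ∀ u ∈ G.cliquesIn (cfilter (G.Adj x) s) n, x ∉ u := fun u hu hxu =>
    G.irrefl (mem_cfilter.1 (hu.1 hxu)).2
  have hdisj : Disjoint (G.cliquesIn (s.erase x) (n + 1))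
      (insert x '' G.cliquesIn (cfilter (G.Adj x) s) n) := by
    refine Set.disjoint_left.2 fun t ht ⟨u, _, hut⟩ => ?_
    exact (subset_erase.1 ht.1).2 (hut ▸ mem_insert_self x u)
  rw [cliquesIn_succ_eq_union hx, Set.ncard_union_eq hdisj (cliquesIn_finite _ _)
    ((cliquesIn_finite _ _).image _), Set.InjOn.ncard_image fun u hu v hv huv => by
      rw [← erase_insert (hxu u hu), huv, erase_insert (hxu v hv)]]

end SimpleGraph

open SimpleGraph

section

variable {V : Type*} {G : SimpleGraph V}

lemma echar_eq_sum_range (s : Finset V) {n : ℕ} (hn : #s ≤ n) :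
    echar G s = ∑ k ∈ range (n + 1), (-1 : ℤ) ^ k * ((G.cliquesIn s (k + 1)).ncard : ℤ) := by
  have hcard : ∀ k, Nat.card {t : Finset V // t ⊆ s ∧ #t = k + 1 ∧ G.IsClique (t : Set V)} =
      (G.cliquesIn s (k + 1)).ncard := fun k => by
    rw [← Nat.card_coe_set_eq]
    exact Nat.card_congr <| Equiv.subtypeEquivRight fun t => by
      rw [cliquesIn, Set.mem_ofPred_eq, isNClique_iff, and_comm (a := G.IsClique _)]
  simp_rw [echar, hcard]
  refine sum_subset (range_subset_range.2 (by omega)) fun k _ hk => ?_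
  rw [cliquesIn_eq_empty (by simp only [mem_range] at hk; omega), Set.ncard_empty]
  simp

theorem echar_eq_echar_erase_add_one_sub [DecidableEq V] {s : Finset V} {x : V} (hx : x ∈ s) :
    echar G s = echar G (s.erase x) + 1 - echar G (cfilter (G.Adj x) s) := by
  have hlink : #(cfilter (G.Adj x) s) ≤ #s :=
    card_le_card fun y hy => (mem_cfilter.1 hy).1
  rw [echar_eq_sum_range s (Nat.le_succ _), echar_eq_sum_range (s.erase x)
      ((card_erase_le).trans (Nat.le_succ _)), echar_eq_sum_range _ hlink]
  have hsplit : ∑ k ∈ range (#s + 2), (-1 : ℤ) ^ k *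
      ((G.cliquesIn (cfilter (G.Adj x) s) k).ncard : ℤ) =
      1 - ∑ k ∈ range (#s + 1), (-1 : ℤ) ^ k *
        ((G.cliquesIn (cfilter (G.Adj x) s) (k + 1)).ncard : ℤ) := by
    rw [sum_range_succ', cliquesIn_zero, Set.ncard_singleton, sub_eq_neg_add, ← sum_neg_distrib]
    simp [pow_succ]
  simp_rw [ncard_cliquesIn_succ hx, Nat.cast_add, mul_add, sum_add_distrib, hsplit]
  ring

lemma echar_empty : echar G ∅ = 0 := by
  simp [echar_eq_sum_range ∅ le_rfl, cliquesIn_eq_empty (G := G) (s := ∅) zero_lt_one]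

lemma echar_singleton (a : V) : echar G {a} = 1 := by
  classical
  have hlink : cfilter (G.Adj a) {a} = ∅ :=
    eq_empty_of_forall_notMem fun y hy => by
      obtain ⟨rfl, hadj⟩ := (mem_cfilter.1 hy).imp_left mem_singleton.1
      exact G.irrefl hadj
  rw [echar_eq_echar_erase_add_one_sub (mem_singleton_self a), erase_singleton, hlink,
    echar_empty]
  simp

theorem Contractible.exists_erase_link [DecidableEq V] {s : Finset V} (hc : Contractible G s)
    (hs : 1 < #s) :
    ∃ x ∈ s, Contractible G (s.erase x) ∧ Contractible G (cfilter (G.Adj x) s) := by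
  rw [Contractible] at hc
  obtain ⟨-, f, hinj, hf⟩ := hc.resolve_left hs.ne'
  obtain ⟨x, hx, hmax⟩ := exists_max_image s f (card_pos.1 (zero_lt_one.trans hs))
  have hlt : ∀ y ∈ s, y ≠ x → f y < f x := fun y hy hyx =>
    (hmax y hy).lt_of_ne fun h => hyx (hinj hy hx h)
  obtain ⟨y, hy, hyx⟩ := exists_mem_ne hs x
  refine ⟨x, hx, ?_, ?_⟩
  · rw [Contractible, card_erase_of_mem hx]
    refine (em (#s - 1 = 1)).imp id fun h1 => ⟨by omega, f, hinj.mono (by simp), ?_⟩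
    intro z hz ⟨w, hw, hwz⟩
    have hzs := mem_of_mem_erase hz
    rw [cfilter_erase fun h => (h.2.trans (hlt z hzs (ne_of_mem_erase hz))).false]
    exact hf z hzs ⟨w, mem_of_mem_erase hw, hwz⟩
  · rw [← cfilter_congr fun z hz => and_iff_left_of_imp fun hadj => hlt z hz hadj.ne']
    exact hf x hx ⟨y, hy, hlt y hy hyx⟩

theorem Contractible.echar_eq_one {s : Finset V} (hc : Contractible G s) : echar G s = 1 := by
  classical
  have hpos : 1 ≤ #s := by
    rw [Contractible] at hc
    omega
  rcases hpos.eq_or_lt with h1 | h1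
  · obtain ⟨a, rfl⟩ := card_eq_one.1 h1.symm
    exact echar_singleton a
  · obtain ⟨x, hx, herase, hlink⟩ := hc.exists_erase_link h1
    rw [echar_eq_echar_erase_add_one_sub hx, herase.echar_eq_one, hlink.echar_eq_one]
    ring
termination_by #s
decreasing_by
  · classical exact card_erase_lt_of_mem hx
  · exact cfilter_card_lt hx (G.irrefl (v := x))

end

/-- Every finite simple graph that is contractible in itself has Euler
characteristic `1`. -/
theorem euler_of_contractible {V : Type*} [Fintype V] (G : SimpleGraph V)
    (h : Contractible G Finset.univ) :
    echar G Finset.univ = 1 :=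
  h.echar_eq_one
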